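/- Let t: U → ℝ be smooth on an open U ⊂ ℝ⁵ and define the vector fields ξ₄ = −(x¹+3tx²)∂₀ − t³∂₁ + t²∂₂ − t∂₃ + ∂₄ and ξ₃ = 3x²∂₀ + 3t²∂₁ − 2t∂₂ + ∂₃ (where ∂ᵢ = ∂/∂xⁱ). Then the Lie bracket [ξ₄, ξ₃] lies in span{ξ₄, ξ₃} at every point of U (i.e., the rank-2 distribution D = span{ξ₄, ξ₃} is integrable) if and only if J := (x¹+3tx²)t_{x⁰} + t³t_{x¹} − t²t_{x²} + t·t_{x³} − t_{x⁴} = 0 on U, i.e., ξ₄(t) = 0. -/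

import Mathlib

/-- The Lie bracket of vector fields on `ℝ⁵` written in coordinates. -/
noncomputable def lieB (X Y : (Fin 5 → ℝ) → Fin 5 → ℝ) (x : Fin 5 → ℝ) : Fin 5 → ℝ :=
  fun i => fderiv ℝ (fun y => Y y i) x (X x) - fderiv ℝ (fun y => X y i) x (Y x)

/-- The vector field `ξ₄ = −(x¹+3tx²)∂₀ − t³∂₁ + t²∂₂ − t∂₃ + ∂₄`. -/
def xi4 (t : (Fin 5 → ℝ) → ℝ) : (Fin 5 → ℝ) → Fin 5 → ℝ :=
  fun x => ![-(x 1 + 3 * t x * x 2), -(t x) ^ 3, (t x) ^ 2, -(t x), 1]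

/-- The vector field `ξ₃ = 3x²∂₀ + 3t²∂₁ − 2t∂₂ + ∂₃`. -/
def xi3 (t : (Fin 5 → ℝ) → ℝ) : (Fin 5 → ℝ) → Fin 5 → ℝ :=
  fun x => ![3 * x 2, 3 * (t x) ^ 2, -(2 * t x), 1, 0]

/-- The relative invariant `J = (x¹+3tx²)t_{x⁰} + t³t_{x¹} − t²t_{x²} + t·t_{x³} − t_{x⁴}`. -/
noncomputable def Jinv (t : (Fin 5 → ℝ) → ℝ) (x : Fin 5 → ℝ) : ℝ :=
  (x 1 + 3 * t x * x 2) * fderiv ℝ t x (Pi.single (0 : Fin 5) 1) +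
    (t x) ^ 3 * fderiv ℝ t x (Pi.single (1 : Fin 5) 1) -
    (t x) ^ 2 * fderiv ℝ t x (Pi.single (2 : Fin 5) 1) +
    t x * fderiv ℝ t x (Pi.single (3 : Fin 5) 1) -
    fderiv ℝ t x (Pi.single (4 : Fin 5) 1)

/-! Differentiating the coefficients gives `[ξ₄, ξ₃] = ξ₃(t) ξ₃ + ξ₄(t) (6t ∂₁ − 2∂₂)`. Comparing
the `∂₄`, `∂₃` and `∂₂` coefficients shows that `6t ∂₁ − 2∂₂` is independent of `ξ₄, ξ₃`, so the
bracket lies in their span exactly when `ξ₄(t) = −J` vanishes. -/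

theorem ContinuousLinearMap.apply_eq_sum_smul_single {𝕜 ι F : Type*} [Semiring 𝕜]
    [TopologicalSpace 𝕜] [AddCommMonoid F] [Module 𝕜 F] [TopologicalSpace F]
    [Fintype ι] [DecidableEq ι] (L : (ι → 𝕜) →L[𝕜] F) (v : ι → 𝕜) :
    L v = ∑ i, v i • L (Pi.single i 1) := by
  conv_lhs => rw [← LinearMap.sum_single_apply _ v, map_sum]
  simp_rw [← map_smul, ← Pi.single_smul', smul_eq_mul, mul_one]

lemma Jinv_eq_neg_fderiv_xi4 (t : (Fin 5 → ℝ) → ℝ) (x : Fin 5 → ℝ) :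
    Jinv t x = -fderiv ℝ t x (xi4 t x) := by
  rw [(fderiv ℝ t x).apply_eq_sum_smul_single, Fin.sum_univ_five]
  simp [Jinv, xi4]
  ring

lemma lieB_xi4_xi3 (t : (Fin 5 → ℝ) → ℝ) (x : Fin 5 → ℝ) (ht : DifferentiableAt ℝ t x) :
    lieB (xi4 t) (xi3 t) x =
      fderiv ℝ t x (xi3 t x) • xi3 t x + fderiv ℝ t x (xi4 t x) • ![0, 6 * t x, -2, 0, 0] := by
  ext i
  -- `fderiv_fun_pow` must be tried before `fderiv_apply`, which would otherwise read `t y ^ n`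
  -- as the `n`-th component of `fun y => HPow.hPow (t y)`.
  fin_cases i <;>
    simp (disch := fun_prop) [lieB, xi3, xi4, fderiv_fun_pow, fderiv_fun_mul, fderiv_fun_add,
      fderiv_fun_neg, fderiv_apply] <;>
    ring

lemma exists_eq_smul_xi4_add_smul_xi3_iff (t : (Fin 5 → ℝ) → ℝ) (x : Fin 5 → ℝ) (A B : ℝ) :
    (∃ a b : ℝ, B • xi3 t x + A • ![0, 6 * t x, -2, 0, 0] = a • xi4 t x + b • xi3 t x) ↔
      A = 0 := by
  refine ⟨fun ⟨a, b, h⟩ => ?_, fun hA => ⟨0, B, by simp [hA]⟩⟩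
  obtain rfl : a = 0 := by simpa [xi3, xi4] using (congrFun h 4).symm
  obtain rfl : b = B := by simpa [xi3, xi4] using (congrFun h 3).symm
  simpa [xi3, xi4] using congrFun h 2

/-- The distribution `span{ξ₄, ξ₃}` is integrable (the bracket `[ξ₄,ξ₃]` lies in the span
at every point) if and only if `J = 0` on `U`. -/
theorem integrability_iff_J_vanishes
    (U : Set (Fin 5 → ℝ)) (hU : IsOpen U) (t : (Fin 5 → ℝ) → ℝ)
    (ht : ContDiffOn ℝ (⊤ : ℕ∞) t U) :
    (∀ x ∈ U, ∃ a b : ℝ, lieB (xi4 t) (xi3 t) x = a • xi4 t x + b • xi3 t x) ↔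
    (∀ x ∈ U, Jinv t x = 0) := by
  refine forall₂_congr fun x hx => ?_
  have htx : DifferentiableAt ℝ t x :=
    (ht.differentiableOn (by simp)).differentiableAt (hU.mem_nhds hx)
  rw [lieB_xi4_xi3 t x htx, Jinv_eq_neg_fderiv_xi4, neg_eq_zero]
  exact exists_eq_smul_xi4_add_smul_xi3_iff t x _ _
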